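/- arXiv:math-ph/0312030 — 5 statements merged into one kernel-verified Lean document; each statement's English description precedes it below -/
import Mathlib

section
/- Let g = ⊕_j g_j be a good Z-grading of a semisimple Lie algebra with good element e ∈ g_2. Write the characteristic Π = ∪_{s≥0} Π_s, where Π is a set of simple roots adapted to the grading and Π_s consists of simple roots α with g_α ⊆ g_s. Then Π = Π_0 ∪ Π_1 ∪ Π_2, i.e., every simple root has degree 0, 1 or 2. -/
/-!
Let `f ≠ 0` be a root vector for `-α`, where `α` is a simple root of degree `d ≥ 3`. Every other
simple root vector commutes with `f`, so all simple root vectors lie in the Lie subalgebra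
`(z(f) ∩ g_{≥0}) + g_{≥d}`, where `z(f)` is the centralizer of `f`. Hence so does `e`, being of
positive degree. Writing `e = c + m` accordingly, `⁅f, e⁆ = ⁅f, m⁆` lies in `g_{≥0}`, while it is
homogeneous of negative degree `2 - d`; so `⁅e, f⁆ = 0`, contradicting the injectivity of `ad e`
in negative degrees.
-/

section GradedLieAlgebra

variable {R L : Type*} [CommRing R] [LieRing L] [LieAlgebra R L]

def gradedAtLeast (g : ℤ → Submodule R L) (a : ℤ) : Submodule R L :=
  ⨆ j ∈ Set.Ici a, g j

variable {g : ℤ → Submodule R L}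

theorem le_gradedAtLeast {a j : ℤ} (h : a ≤ j) : g j ≤ gradedAtLeast g a :=
  le_biSup g (Set.mem_Ici.2 h)

theorem gradedAtLeast_antitone : Antitone (gradedAtLeast g) := fun _ _ hab =>
  iSup₂_le fun _ hj => le_gradedAtLeast (hab.trans hj)

theorem disjoint_gradedAtLeast (hg : iSupIndep g) {a j : ℤ} (h : j < a) :
    Disjoint (g j) (gradedAtLeast g a) :=
  hg.disjoint_biSup (Set.notMem_Ici.2 h)

theorem lie_mem_gradedAtLeast (hgrade : ∀ i j : ℤ, ∀ x ∈ g i, ∀ y ∈ g j, ⁅x, y⁆ ∈ g (i + j))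
    {a b : ℤ} {x y : L} (hx : x ∈ gradedAtLeast g a) (hy : y ∈ gradedAtLeast g b) :
    ⁅x, y⁆ ∈ gradedAtLeast g (a + b) := by
  have hhom : ∀ i, a ≤ i → ∀ x ∈ g i, ⁅x, y⁆ ∈ gradedAtLeast g (a + b) := by
    intro i hi x hx
    suffices gradedAtLeast g b ≤ (gradedAtLeast g (a + b)).comap (LieAlgebra.ad R L x) from
      this hy
    exact iSup₂_le fun j hj z hz => le_gradedAtLeast (add_le_add hi hj) (hgrade i j x hx z hz)
  suffices gradedAtLeast g a ≤ (gradedAtLeast g (a + b)).comap (LieAlgebra.ad R L y) by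
    rw [← lie_skew, neg_mem_iff]
    exact this hx
  refine iSup₂_le fun i hi z hz => ?_
  rw [Submodule.mem_comap, LieAlgebra.ad_apply, ← lie_skew, neg_mem_iff]
  exact hhom i hi z hz

def centralizerSupGradedAtLeast
    (hgrade : ∀ i j : ℤ, ∀ x ∈ g i, ∀ y ∈ g j, ⁅x, y⁆ ∈ g (i + j))
    (f : L) {d : ℤ} (hd : 0 ≤ d) : LieSubalgebra R L where
  toSubmodule := (LinearMap.ker (LieAlgebra.ad R L f) ⊓ gradedAtLeast g 0) ⊔ gradedAtLeast g d
  lie_mem' {x y} hx hy := by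
    obtain ⟨c₁, ⟨hc₁f : ⁅f, c₁⁆ = 0, hc₁ : c₁ ∈ gradedAtLeast g 0⟩, m₁, hm₁, rfl⟩ :=
      Submodule.mem_sup.mp hx
    obtain ⟨c₂, ⟨hc₂f : ⁅f, c₂⁆ = 0, hc₂ : c₂ ∈ gradedAtLeast g 0⟩, m₂, hm₂, rfl⟩ :=
      Submodule.mem_sup.mp hy
    have hcc : ⁅c₁, c₂⁆ ∈ LinearMap.ker (LieAlgebra.ad R L f) ⊓ gradedAtLeast g 0 := by
      refine ⟨?_, by simpa using lie_mem_gradedAtLeast hgrade hc₁ hc₂⟩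
      change ⁅f, ⁅c₁, c₂⁆⁆ = 0
      rw [leibniz_lie, hc₁f, hc₂f, zero_lie, lie_zero, add_zero]
    have hcm : ⁅c₁, m₂⁆ ∈ gradedAtLeast g d := by simpa using lie_mem_gradedAtLeast hgrade hc₁ hm₂
    have hmc : ⁅m₁, c₂⁆ ∈ gradedAtLeast g d := by simpa using lie_mem_gradedAtLeast hgrade hm₁ hc₂
    have hmm : ⁅m₁, m₂⁆ ∈ gradedAtLeast g d :=
      gradedAtLeast_antitone (le_add_of_nonneg_left hd) (lie_mem_gradedAtLeast hgrade hm₁ hm₂)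
    rw [add_lie, lie_add, lie_add]
    exact add_mem (add_mem (Submodule.mem_sup_left hcc) (Submodule.mem_sup_right hcm))
      (add_mem (Submodule.mem_sup_right hmc) (Submodule.mem_sup_right hmm))

theorem lie_eq_zero_of_mem_centralizerSupGradedAtLeast
    (hgrade : ∀ i j : ℤ, ∀ x ∈ g i, ∀ y ∈ g j, ⁅x, y⁆ ∈ g (i + j)) (hg : iSupIndep g)
    {f x : L} {d k : ℤ} (hd : 0 ≤ d) (hf : f ∈ g (-d)) (hk : k < d)
    (hx : x ∈ centralizerSupGradedAtLeast hgrade f hd) (hxk : x ∈ g k) : ⁅f, x⁆ = 0 := by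
  obtain ⟨c, ⟨hcf : ⁅f, c⁆ = 0, -⟩, m, hm, rfl⟩ := Submodule.mem_sup.mp hx
  have h_nonneg : ⁅f, c + m⁆ ∈ gradedAtLeast g 0 := by
    rw [lie_add, hcf, zero_add]
    simpa using lie_mem_gradedAtLeast hgrade (le_gradedAtLeast le_rfl hf) hm
  have h_neg : ⁅f, c + m⁆ ∈ g (-d + k) := hgrade _ _ f hf _ hxk
  exact Submodule.disjoint_def.mp (disjoint_gradedAtLeast hg (by omega)) _ h_neg h_nonneg

end GradedLieAlgebra

theorem stmt5_general {F L : Type*} [Field F]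
    [LieRing L] [LieAlgebra F L]
    (g : ℤ → Submodule F L)
    (hdecomp : DirectSum.IsInternal g)
    (hgrade : ∀ i j : ℤ, ∀ x ∈ g i, ∀ y ∈ g j, ⁅x, y⁆ ∈ g (i + j))
    (e : L) (he : e ∈ g 2)
    (hinj : ∀ j : ℤ, j ≤ -1 → ∀ x ∈ g j, ⁅e, x⁆ = 0 → x = 0)
    {ι : Type*} (E Fv : ι → L) (d : ι → ℤ)
    (hE : ∀ i, E i ∈ g (d i)) (hF : ∀ i, Fv i ∈ g (-(d i)))
    (hdpos : ∀ i, 0 ≤ d i)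
    (hFne : ∀ i, Fv i ≠ 0)
    (hcomm : ∀ i j, i ≠ j → ⁅E i, Fv j⁆ = 0)
    (hgen : ∀ j : ℤ, 0 < j → g j ≤ (LieSubalgebra.lieSpan F L (Set.range E)).toSubmodule) :
    ∀ i, d i ≤ 2 := by
  intro i
  by_contra! hi
  have hEK : Set.range E ⊆ centralizerSupGradedAtLeast hgrade (Fv i) (hdpos i) := by
    rintro _ ⟨j, rfl⟩
    obtain rfl | hji := eq_or_ne j i
    · exact Submodule.mem_sup_right (le_gradedAtLeast le_rfl (hE j))
    · refine Submodule.mem_sup_left ⟨?_, le_gradedAtLeast (hdpos j) (hE j)⟩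
      change ⁅Fv i, E j⁆ = 0
      rw [← lie_skew, hcomm j i hji, neg_zero]
  have heK := LieSubalgebra.lieSpan_le.mpr hEK (hgen 2 two_pos he)
  have hfe : ⁅Fv i, e⁆ = 0 := lie_eq_zero_of_mem_centralizerSupGradedAtLeast hgrade
    hdecomp.submodule_iSupIndep (hdpos i) (hF i) hi heK he
  exact hFne i (hinj _ (by omega) _ (hF i) (by rw [← lie_skew, hfe, neg_zero]))

/-- for a good ℤ-grading of a semisimple Lie algebra with good element
`e ∈ g 2`, every simple root has degree `0`, `1` or `2`.  Simple root data is encoded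
abstractly: homogeneous simple root vectors `E i ∈ g (d i)` and `Fv i ∈ g (-(d i))`
with nonnegative degrees `d i`, `⁅E i, Fv j⁆ = 0` for `i ≠ j`, such that the positive
part of the grading is contained in the Lie subalgebra generated by the `E i`.
The conclusion is `d i ≤ 2` for every `i`, i.e. `Π = Π₀ ∪ Π₁ ∪ Π₂`. -/
theorem stmt5 {F L : Type*} [Field F] [CharZero F] [IsAlgClosed F]
    [LieRing L] [LieAlgebra F L] [FiniteDimensional F L]
    [LieAlgebra.IsSemisimple F L]
    (g : ℤ → Submodule F L)
    (hdecomp : DirectSum.IsInternal g)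
    (hgrade : ∀ i j : ℤ, ∀ x ∈ g i, ∀ y ∈ g j, ⁅x, y⁆ ∈ g (i + j))
    (e : L) (he : e ∈ g 2)
    (hinj : ∀ j : ℤ, j ≤ -1 → ∀ x ∈ g j, ⁅e, x⁆ = 0 → x = 0)
    (hsurj : ∀ j : ℤ, -1 ≤ j → ∀ y ∈ g (j + 2), ∃ x ∈ g j, ⁅e, x⁆ = y)
    {ι : Type*} (E Fv : ι → L) (d : ι → ℤ)
    (hE : ∀ i, E i ∈ g (d i)) (hF : ∀ i, Fv i ∈ g (-(d i)))
    (hdpos : ∀ i, 0 ≤ d i)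
    (hEne : ∀ i, E i ≠ 0) (hFne : ∀ i, Fv i ≠ 0)
    (hcomm : ∀ i j, i ≠ j → ⁅E i, Fv j⁆ = 0)
    (hgen : ∀ j : ℤ, 0 < j → g j ≤ (LieSubalgebra.lieSpan F L (Set.range E)).toSubmodule) :
    ∀ i, d i ≤ 2 :=
  stmt5_general g hdecomp hgrade e he hinj E Fv d hE hF hdpos hFne hcomm hgen
end

section
/- The generating function F(q) = Σ_n Pyr_n q^n for the total number Pyr_n of pyramids of size n (summed over all partitions of n, counting ∏_{i}(2(p_i - p_{i+1})+1) pyramids per partition p) satisfies F(q) = Σ_{n≥1} ( ∏_{k=1}^{n-1} (1+q^k)/(1-q^k)^2 ) · q^n/(1-q^n). -/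
/-!
Write the parts of a partition of `N` as `p₁ ≥ ⋯ ≥ pₙ > 0` and put `d_k = p_k - p_{k+1}`
(with `p_{n+1} = 0`); the `d_k` are the multiplicities of the conjugate partition. The map
`p ↦ (d₁, …, dₙ)` is a bijection onto the tuples of naturals with `dₙ ≥ 1`, inverted by
taking suffix sums, and under it `N = ∑ k d_k` while the pyramid count of `p` is
`∏_{k<n} (2 d_k + 1)`. Hence the partitions with `n` parts contribute
`∏_{k<n} (∑_d (2d+1) q^{kd}) · ∑_{d≥1} q^{nd}`, which is the `n`-th summand because
`∑_d (2d+1) t^d = (1+t)/(1-t)²` and `∑_{d≥1} t^d = t/(1-t)`.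
-/

open PowerSeries

/-- The product `∏_i (2(p_i - p_{i+1}) + 1)` over consecutive entries of a
(weakly decreasing) list. -/
def consProd : List ℕ → ℕ
  | [] => 1
  | [_] => 1
  | a :: b :: l => (2 * (a - b) + 1) * consProd (b :: l)

/-- The number `Pyr n` of pyramids of size `n`: the sum over all partitions `p` of `n`
of the number `∏_i (2(p_i - p_{i+1}) + 1)` of pyramids attached to `p` (parts listed
in decreasing order). -/
def PyrCount (n : ℕ) : ℕ :=
  ∑ P : n.Partition, consProd ((P.parts.sort (· ≤ ·)).reverse)

lemma Finset.prod_Icc_one_eq_prod_range {M : Type*} [CommMonoid M] (f : ℕ → M) (n : ℕ) :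
    ∏ k ∈ Icc 1 n, f k = ∏ i ∈ range n, f (i + 1) := by
  rw [range_eq_Ico, prod_Ico_add' f 0 n 1, zero_add, Ico_add_one_right_eq_Icc]

lemma Finset.sum_Icc_one_eq_sum_range {M : Type*} [AddCommMonoid M] (f : ℕ → M) (n : ℕ) :
    ∑ k ∈ Icc 1 n, f k = ∑ i ∈ range n, f (i + 1) := by
  rw [range_eq_Ico, sum_Ico_add' f 0 n 1, zero_add, Ico_add_one_right_eq_Icc]

section GeometricSeries

variable {K : Type*} [Field K]

lemma inv_one_sub_X : (1 - X : K⟦X⟧)⁻¹ = mk 1 := by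
  rw [PowerSeries.inv_eq_iff_mul_eq_one (by simp)]
  exact mk_one_mul_one_sub_eq_one K

lemma one_add_X_mul_inv_one_sub_X_sq :
    (1 + X) * ((1 - X : K⟦X⟧)⁻¹) ^ 2 = mk fun m => (2 * m + 1 : K) := by
  have hsq : ((1 - X : K⟦X⟧)⁻¹) ^ 2 = mk fun m => (m + 1 : K) := by
    rw [inv_one_sub_X, mk_one_pow_eq_mk_choose_add (S := K) (d := 1)]
    ext m
    simp [add_comm]
  have hinv : (1 - X) * (1 - X : K⟦X⟧)⁻¹ = 1 := PowerSeries.mul_inv_cancel _ (by simp)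
  -- `1 + X = 2 - (1 - X)`
  calc (1 + X) * ((1 - X : K⟦X⟧)⁻¹) ^ 2
      = 2 * ((1 - X)⁻¹) ^ 2 - (1 - X) * (1 - X)⁻¹ * (1 - X)⁻¹ := by ring
    _ = mk fun m => (2 * m + 1 : K) := by
      rw [hinv, one_mul, hsq, inv_one_sub_X, two_mul]
      ext m
      simp only [map_sub, map_add, coeff_mk, Pi.one_apply]
      ring

lemma X_mul_inv_one_sub_X : X * (1 - X : K⟦X⟧)⁻¹ = mk fun m => if m = 0 then 0 else 1 := by
  rw [inv_one_sub_X]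
  ext (_ | m) <;> simp [coeff_succ_X_mul]

lemma expand_inv_one_sub_X {k : ℕ} (hk : k ≠ 0) :
    expand k hk (1 - X : K⟦X⟧)⁻¹ = (1 - X ^ k)⁻¹ := by
  have h : expand k hk (1 - X : K⟦X⟧) = 1 - X ^ k := by simp
  rw [PowerSeries.eq_inv_iff_mul_eq_one (by simp [hk]), ← h, ← map_mul,
    PowerSeries.inv_mul_cancel _ (by simp), map_one]

lemma expand_mk {k : ℕ} (hk : k ≠ 0) (a : ℕ → K) :
    expand k hk (mk a) = mk fun j => if k ∣ j then a (j / k) else 0 := by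
  ext j
  simp [coeff_expand]

lemma one_add_X_pow_mul_inv_one_sub_X_pow_sq {k : ℕ} (hk : k ≠ 0) :
    (1 + X ^ k) * ((1 - X ^ k : K⟦X⟧)⁻¹) ^ 2 =
      mk fun j => if k ∣ j then (2 * (j / k : ℕ) + 1 : K) else 0 := by
  calc _ = expand k hk ((1 + X) * ((1 - X : K⟦X⟧)⁻¹) ^ 2) := by simp [expand_inv_one_sub_X]
    _ = _ := by rw [one_add_X_mul_inv_one_sub_X_sq, expand_mk]

lemma X_pow_mul_inv_one_sub_X_pow {n : ℕ} (hn : n ≠ 0) :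
    X ^ n * (1 - X ^ n : K⟦X⟧)⁻¹ =
      mk fun j => if n ∣ j then (if j / n = 0 then 0 else 1) else 0 := by
  calc _ = expand n hn (X * (1 - X : K⟦X⟧)⁻¹) := by simp [expand_inv_one_sub_X]
    _ = _ := by rw [X_mul_inv_one_sub_X, expand_mk]

end GeometricSeries

open Finset

section PyramidSeries

variable {K : Type*} [Field K]

def pyramidFactor (n k m : ℕ) : ℕ := if k = n then (if m = 0 then 0 else 1) else 2 * m + 1

def pyramidWeight (n : ℕ) (l : ℕ →₀ ℕ) : ℕ :=
  ∏ k ∈ Icc 1 n, if k ∣ l k then pyramidFactor n k (l k / k) else 0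

lemma pyramidTerm_eq_prod {n : ℕ} (hn : 1 ≤ n) :
    (∏ k ∈ Icc 1 (n - 1), (1 + X ^ k) * ((1 - X ^ k : K⟦X⟧)⁻¹) ^ 2) *
        X ^ n * (1 - X ^ n)⁻¹ =
      ∏ k ∈ Icc 1 n,
        PowerSeries.mk fun j => if k ∣ j then (pyramidFactor n k (j / k) : K) else 0 := by
  obtain ⟨m, rfl⟩ := Nat.exists_eq_add_of_le' hn
  rw [prod_Icc_succ_top (by omega), Nat.add_sub_cancel, mul_assoc,
    X_pow_mul_inv_one_sub_X_pow (by omega)]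
  congr 1
  · refine prod_congr rfl fun k hk => ?_
    obtain ⟨hk1, hkm⟩ := mem_Icc.mp hk
    rw [one_add_X_pow_mul_inv_one_sub_X_pow_sq (by omega)]
    simp [pyramidFactor, show k ≠ m + 1 by omega]
  · simp [pyramidFactor]

lemma coeff_pyramidTerm {n : ℕ} (hn : 1 ≤ n) (N : ℕ) :
    coeff N ((∏ k ∈ Icc 1 (n - 1), (1 + X ^ k) * ((1 - X ^ k : K⟦X⟧)⁻¹) ^ 2) *
        X ^ n * (1 - X ^ n)⁻¹) =
      ∑ l ∈ (Icc 1 n).finsuppAntidiag N, (pyramidWeight n l : K) := by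
  rw [pyramidTerm_eq_prod hn, coeff_prod]
  simp [pyramidWeight, apply_ite]

end PyramidSeries

namespace List

def gaps : List ℕ → List ℕ
  | [] => []
  | [a] => [a]
  | a :: b :: l => (a - b) :: gaps (b :: l)

def suffixSums : List ℕ → List ℕ
  | [] => []
  | d :: ds => (d :: ds).sum :: suffixSums ds

@[simp] lemma length_gaps : ∀ L : List ℕ, L.gaps.length = L.length
  | [] | [_] => rfl
  | _ :: b :: l => by simp [gaps, length_gaps (b :: l)]

@[simp] lemma length_suffixSums : ∀ ds : List ℕ, ds.suffixSums.length = ds.length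
  | [] => rfl
  | _ :: ds => by simp [suffixSums, length_suffixSums ds]

lemma gaps_suffixSums : ∀ ds : List ℕ, ds.suffixSums.gaps = ds
  | [] | [_] => by simp [suffixSums, gaps]
  | d :: e :: ds => by
    show ((d :: e :: ds).sum - (e :: ds).sum) :: (e :: ds).suffixSums.gaps = d :: e :: ds
    rw [gaps_suffixSums (e :: ds), sum_cons, Nat.add_sub_cancel]

lemma sum_gaps : ∀ {L : List ℕ}, L.Pairwise (· ≥ ·) → L.gaps.sum = L.headD 0
  | [], _ | [_], _ => by simp [gaps]
  | a :: b :: l, hL => by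
    have hba : b ≤ a := rel_of_pairwise_cons hL mem_cons_self
    show ((a - b) :: (b :: l).gaps).sum = a
    rw [sum_cons, sum_gaps hL.of_cons, headD_cons, Nat.sub_add_cancel hba]

lemma suffixSums_gaps : ∀ {L : List ℕ}, L.Pairwise (· ≥ ·) → L.gaps.suffixSums = L
  | [], _ | [_], _ => by simp [gaps, suffixSums]
  | a :: b :: l, hL => by
    have hba : b ≤ a := rel_of_pairwise_cons hL mem_cons_self
    show ((a - b) :: (b :: l).gaps).sum :: (b :: l).gaps.suffixSums = a :: b :: l
    rw [suffixSums_gaps hL.of_cons, sum_cons, sum_gaps hL.of_cons, headD_cons,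
      Nat.sub_add_cancel hba]

lemma le_sum_of_mem_suffixSums : ∀ {ds : List ℕ} {x : ℕ}, x ∈ ds.suffixSums → x ≤ ds.sum
  | d :: ds, x, hx => by
    rcases mem_cons.mp hx with rfl | hx
    · rfl
    · have := le_sum_of_mem_suffixSums hx
      simp only [sum_cons]
      omega

lemma pairwise_suffixSums : ∀ ds : List ℕ, ds.suffixSums.Pairwise (· ≥ ·)
  | [] => Pairwise.nil
  | d :: ds => pairwise_cons.mpr
      ⟨fun _ hx => (le_sum_of_mem_suffixSums hx).trans (by simp), pairwise_suffixSums ds⟩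

lemma pos_of_mem_suffixSums : ∀ {ds : List ℕ}, 0 < ds.getD (ds.length - 1) 0 →
    ∀ x ∈ ds.suffixSums, 0 < x
  | [d], h, x, hx => by simp_all [suffixSums]
  | d :: e :: ds, h, x, hx => by
    have ih := pos_of_mem_suffixSums (ds := e :: ds) (by simpa using h)
    rcases mem_cons.mp hx with rfl | hx
    · have := ih _ mem_cons_self
      simp only [sum_cons] at this ⊢
      omega
    · exact ih x hx

lemma sum_eq_sum_range_getD : ∀ ds : List ℕ,
    ds.sum = ∑ i ∈ Finset.range ds.length, ds.getD i 0
  | [] => rfl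
  | d :: ds => by
    rw [sum_cons, sum_eq_sum_range_getD ds, length_cons, Finset.sum_range_succ', add_comm]
    simp

lemma sum_suffixSums : ∀ ds : List ℕ,
    ds.suffixSums.sum = ∑ i ∈ Finset.range ds.length, (i + 1) * ds.getD i 0
  | [] => rfl
  | d :: ds => by
    rw [suffixSums, sum_cons, sum_cons, sum_suffixSums ds, length_cons, Finset.sum_range_succ',
      sum_eq_sum_range_getD ds]
    simp only [getD_cons_succ, getD_cons_zero, add_mul, one_mul, Finset.sum_add_distrib]
    ring

lemma getD_gaps_length_sub_one : ∀ L : List ℕ,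
    L.gaps.getD (L.length - 1) 0 = L.getD (L.length - 1) 0
  | [] | [_] => rfl
  | a :: b :: l => by simpa [gaps] using getD_gaps_length_sub_one (b :: l)

noncomputable def scaledFinsupp (ds : List ℕ) : ℕ →₀ ℕ :=
  Finsupp.onFinset (Icc 1 ds.length) (fun k => k * ds.getD (k - 1) 0) fun k hk => by
    obtain ⟨hk0, hd⟩ := mul_ne_zero_iff.mp hk
    have : k - 1 < ds.length := by
      by_contra h
      exact hd (getD_eq_default _ _ (by omega))
    simp only [mem_Icc]
    omega

lemma scaledFinsupp_apply (ds : List ℕ) (k : ℕ) :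
    ds.scaledFinsupp k = k * ds.getD (k - 1) 0 :=
  rfl

lemma scaledFinsupp_mem_finsuppAntidiag (ds : List ℕ) :
    ds.scaledFinsupp ∈ (Icc 1 ds.length).finsuppAntidiag ds.suffixSums.sum := by
  refine mem_finsuppAntidiag.mpr ⟨?_, Finsupp.support_onFinset_subset⟩
  rw [sum_suffixSums, Finset.sum_Icc_one_eq_sum_range]
  simp [scaledFinsupp_apply]

end List

lemma consProd_eq_prod_gaps : ∀ L : List ℕ,
    consProd L = ∏ i ∈ range (L.length - 1), (2 * L.gaps.getD i 0 + 1)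
  | [] | [_] => rfl
  | a :: b :: l => by
    rw [consProd, consProd_eq_prod_gaps (b :: l)]
    simp only [List.length_cons, Nat.add_sub_cancel]
    rw [prod_range_succ', mul_comm]
    simp [List.gaps]

def unscaledList (n : ℕ) (l : ℕ →₀ ℕ) : List ℕ :=
  (List.range n).map fun i => l (i + 1) / (i + 1)

@[simp] lemma length_unscaledList (n : ℕ) (l : ℕ →₀ ℕ) :
    (unscaledList n l).length = n := by
  simp [unscaledList]

lemma unscaledList_scaledFinsupp (ds : List ℕ) :
    unscaledList ds.length ds.scaledFinsupp = ds := by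
  refine List.ext_getElem (by simp) fun i h _ => ?_
  simp [unscaledList, List.scaledFinsupp_apply, List.getElem?_eq_getElem (by simpa using h)]

lemma scaledFinsupp_unscaledList {n : ℕ} {l : ℕ →₀ ℕ} (hl : l.support ⊆ Icc 1 n)
    (hdvd : ∀ k ∈ Icc 1 n, k ∣ l k) : (unscaledList n l).scaledFinsupp = l := by
  ext k
  rw [List.scaledFinsupp_apply]
  by_cases hk : k ∈ Icc 1 n
  · have hk' := mem_Icc.mp hk
    rw [List.getD_eq_getElem _ _ (by rw [length_unscaledList]; omega)]
    simp [unscaledList, Nat.sub_add_cancel hk'.1, Nat.mul_div_cancel' (hdvd k hk)]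
  · rw [Finsupp.notMem_support_iff.mp (fun h => hk (hl h))]
    rcases Nat.eq_zero_or_pos k with rfl | hk0
    · simp
    · rw [mem_Icc] at hk
      rw [List.getD_eq_default _ _ (by rw [length_unscaledList]; omega), mul_zero]

lemma pyramidWeight_scaledFinsupp {ds : List ℕ} (h : ds.getD (ds.length - 1) 0 ≠ 0) :
    pyramidWeight ds.length ds.scaledFinsupp =
      ∏ i ∈ range (ds.length - 1), (2 * ds.getD i 0 + 1) := by
  obtain ⟨n, hn⟩ : ∃ n, ds.length = n + 1 :=
    Nat.exists_eq_add_one.mpr (List.length_pos_iff.mpr (by rintro rfl; simp at h))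
  simp only [pyramidWeight, List.scaledFinsupp_apply, prod_Icc_one_eq_prod_range,
    dvd_mul_right, if_true, Nat.add_sub_cancel, Nat.mul_div_cancel_left _ (Nat.succ_pos _), hn]
  rw [prod_range_succ]
  simp only [hn, Nat.add_sub_cancel] at h
  simp only [pyramidFactor, if_pos, h, if_false, mul_one]
  refine prod_congr rfl fun i hi => if_neg ?_
  have := mem_range.mp hi
  omega

lemma dvd_and_ne_zero_of_pyramidWeight_ne_zero {n : ℕ} {l : ℕ →₀ ℕ} (hn : 1 ≤ n)
    (h : pyramidWeight n l ≠ 0) : (∀ k ∈ Icc 1 n, k ∣ l k) ∧ l n ≠ 0 := by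
  have hfactor := prod_ne_zero_iff.mp h
  have hdvd : ∀ k ∈ Icc 1 n, k ∣ l k := fun k hk => by
    by_contra hndvd
    exact hfactor k hk (if_neg hndvd)
  refine ⟨hdvd, fun hl => hfactor n (mem_Icc.mpr ⟨hn, le_rfl⟩) ?_⟩
  simp [hl, pyramidFactor]

namespace Nat.Partition

variable {N : ℕ}

def descParts (P : N.Partition) : List ℕ := (P.parts.sort (· ≤ ·)).reverse

lemma coe_descParts (P : N.Partition) : (P.descParts : Multiset ℕ) = P.parts := by
  simp [descParts]

lemma pairwise_descParts (P : N.Partition) : P.descParts.Pairwise (· ≥ ·) :=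
  List.pairwise_reverse.mpr (P.parts.pairwise_sort _)

lemma sum_descParts (P : N.Partition) : P.descParts.sum = N := by
  rw [← Multiset.sum_coe, coe_descParts, P.parts_sum]

lemma pos_of_mem_descParts (P : N.Partition) {x : ℕ} (hx : x ∈ P.descParts) : 0 < x :=
  P.parts_pos (by rwa [← coe_descParts, Multiset.mem_coe])

lemma descParts_injective : Function.Injective (descParts (N := N)) := fun P Q h =>
  Nat.Partition.ext (by rw [← coe_descParts, h, coe_descParts])

lemma descParts_mk {L : List ℕ} (hL : L.Pairwise (· ≥ ·))
    (hpos : ∀ {i}, i ∈ (L : Multiset ℕ) → 0 < i) (hsum : (L : Multiset ℕ).sum = N) :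
    (Nat.Partition.mk (L : Multiset ℕ) hpos hsum).descParts = L := by
  show ((L : Multiset ℕ).sort (· ≤ ·)).reverse = L
  rw [← Multiset.coe_reverse, Multiset.coe_sort,
    List.mergeSort_of_pairwise (by simpa using List.pairwise_reverse.mpr hL),
    List.reverse_reverse]

lemma length_descParts_mem_Icc (hN : 1 ≤ N) (P : N.Partition) :
    P.descParts.length ∈ Icc 1 N := by
  have hle := List.length_le_sum_of_one_le _ fun _ hx => P.pos_of_mem_descParts hx
  rw [sum_descParts] at hle
  refine mem_Icc.mpr ⟨List.length_pos_iff.mpr fun h => ?_, hle⟩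
  have := P.sum_descParts
  rw [h, List.sum_nil] at this
  omega

/-- For parts `p₁ ≥ ⋯ ≥ pₙ`, the number `n` of parts and `k ↦ k (p_k - p_{k+1})`. -/
noncomputable def pyramidData (P : N.Partition) : Σ _ : ℕ, ℕ →₀ ℕ :=
  ⟨P.descParts.length, P.descParts.gaps.scaledFinsupp⟩

lemma suffixSums_unscaledList_pyramidData (P : N.Partition) :
    (unscaledList P.pyramidData.1 P.pyramidData.2).suffixSums = P.descParts := by
  rw [pyramidData, ← List.length_gaps, unscaledList_scaledFinsupp,
    List.suffixSums_gaps P.pairwise_descParts]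

lemma pyramidData_injective : Function.Injective (pyramidData (N := N)) := fun P Q h =>
  descParts_injective (by
    rw [← suffixSums_unscaledList_pyramidData, h, suffixSums_unscaledList_pyramidData])

lemma pyramidData_mem (hN : 1 ≤ N) (P : N.Partition) :
    P.pyramidData ∈ (Icc 1 N).sigma fun n => (Icc 1 n).finsuppAntidiag N := by
  refine mem_sigma.mpr ⟨length_descParts_mem_Icc hN P, ?_⟩
  have := P.descParts.gaps.scaledFinsupp_mem_finsuppAntidiag
  rwa [List.suffixSums_gaps P.pairwise_descParts, sum_descParts, List.length_gaps] at this

lemma consProd_descParts (hN : 1 ≤ N) (P : N.Partition) :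
    consProd P.descParts = pyramidWeight P.pyramidData.1 P.pyramidData.2 := by
  have hlast : P.descParts.gaps.getD (P.descParts.gaps.length - 1) 0 ≠ 0 := by
    have hlen := (mem_Icc.mp (length_descParts_mem_Icc hN P)).1
    rw [List.length_gaps, List.getD_gaps_length_sub_one, List.getD_eq_getElem _ _ (by omega)]
    exact (P.pos_of_mem_descParts (List.getElem_mem _)).ne'
  rw [pyramidData, consProd_eq_prod_gaps, ← List.length_gaps,
    pyramidWeight_scaledFinsupp hlast]

lemma exists_pyramidData_eq {n : ℕ} {l : ℕ →₀ ℕ} (hn : 1 ≤ n)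
    (hl : l ∈ (Icc 1 n).finsuppAntidiag N) (hw : pyramidWeight n l ≠ 0) :
    ∃ P : N.Partition, P.pyramidData = ⟨n, l⟩ := by
  obtain ⟨hsum, hsupp⟩ := mem_finsuppAntidiag.mp hl
  obtain ⟨hdvd, hln⟩ := dvd_and_ne_zero_of_pyramidWeight_ne_zero hn hw
  set ds := unscaledList n l
  have hds : ds.scaledFinsupp = l := scaledFinsupp_unscaledList hsupp hdvd
  have hlast : 0 < ds.getD (ds.length - 1) 0 := by
    have hln' : l n = n * ds.getD (n - 1) 0 := by rw [← hds]; rfl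
    rw [length_unscaledList]
    exact Nat.pos_of_ne_zero fun h => hln (by rw [hln', h, mul_zero])
  have hsum' : ds.suffixSums.sum = N := by
    have := ds.scaledFinsupp_mem_finsuppAntidiag
    rw [hds, length_unscaledList] at this
    exact (mem_finsuppAntidiag.mp this).1.symm.trans hsum
  refine ⟨⟨ds.suffixSums, fun hx => List.pos_of_mem_suffixSums hlast _ hx,
    by rwa [Multiset.sum_coe]⟩, ?_⟩
  rw [pyramidData, descParts_mk (List.pairwise_suffixSums ds), List.gaps_suffixSums, hds,
    List.length_suffixSums, length_unscaledList]

end Nat.Partition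

open Nat.Partition in
theorem pyrCount_eq_sum_pyramidWeight {N : ℕ} (hN : 1 ≤ N) :
    PyrCount N = ∑ x ∈ (Icc 1 N).sigma (fun n => (Icc 1 n).finsuppAntidiag N),
      pyramidWeight x.1 x.2 := by
  refine sum_of_injOn pyramidData pyramidData_injective.injOn
    (fun P _ => pyramidData_mem hN P) ?_ fun P _ => consProd_descParts hN P
  rintro ⟨n, l⟩ hx hnot
  obtain ⟨hn, hl⟩ := mem_sigma.mp hx
  by_contra hw
  obtain ⟨P, hP⟩ := exists_pyramidData_eq (mem_Icc.mp hn).1 hl hw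
  exact hnot ⟨P, mem_coe.mpr (mem_univ P), hP⟩

/-- The summands with `n > N` have order `> N`, so truncating the sum at `N` does not change
the `N`-th coefficient. -/
theorem stmt12 (N : ℕ) (hN : 1 ≤ N) :
    (PyrCount N : ℚ) =
      PowerSeries.coeff (R := ℚ) N (∑ n ∈ Finset.Icc 1 N,
        (∏ k ∈ Finset.Icc 1 (n - 1),
            (1 + (X : PowerSeries ℚ) ^ k) * ((1 - (X : PowerSeries ℚ) ^ k)⁻¹) ^ 2) *
          (X : PowerSeries ℚ) ^ n * (1 - (X : PowerSeries ℚ) ^ n)⁻¹) := by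
  rw [map_sum, sum_congr rfl fun n hn => coeff_pyramidTerm (mem_Icc.mp hn).1 N, sum_sigma']
  exact_mod_cast pyrCount_eq_sum_pyramidWeight hN
end

section
/- As formal power series, Σ_{n≥1} ( ∏_{k=1}^{n-1} (1+q^k)/(1-q^k)^2 ) · q^n/(1-q^n) = Σ_{n≥1} ( q^{(3n²-n)/2} - q^{(3n²+n)/2} ) · ∏_{k≥1} (1+q^k)/(1-q^k)^2. -/
/-!
Work modulo `X^(N+1)`, that is, in a commutative ring in which `q^(N+1) = 0`: there every
series is a finite sum and `(q;q)_N`, `(-q;q)_N` play the role of the infinite products.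
The q-binomial theorem at `t = -q^(m+1)` writes `(-q;q)_m / (q;q)_(m+1)` as a series in `m`;
after swapping the double sum, Euler's identity `∑ t^k / (q;q)_k = 1 / (t;q)_∞` at
`t = q^(k+1)` collapses the left side to `(-q;q)_∞ / (q;q)_∞² · q ∑ (-q)^n (-q;q)_n`.
For `V_k = ∑ (-q^(k+1))^n (-q^(k+1);q)_n`, peeling off the first and then the last factor of
the Pochhammer symbols gives `V_k = 1 - q^(k+1) + q^(3k+4) V_(k+1)`, and unrolling this
recursion from `q V_0` produces the pentagonal sum.
-/

open Finset PowerSeries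
open scoped Ring

@[to_additive]
lemma prod_Icc_eq_prod_range_succ {M : Type*} [CommMonoid M] (f : ℕ → M) (n : ℕ) :
    ∏ k ∈ Icc 1 n, f k = ∏ k ∈ range n, f (k + 1) := by
  rw [range_eq_Ico, prod_Ico_add', zero_add, Ico_add_one_right_eq_Icc]

section QSeries

variable {A : Type*} [CommRing A]

def qPochhammer (a q : A) (n : ℕ) : A := ∏ i ∈ range n, (1 - a * q ^ i)

@[simp]
lemma qPochhammer_zero (a q : A) : qPochhammer a q 0 = 1 := prod_range_zero _

@[simp]
lemma qPochhammer_zero_left (q : A) (n : ℕ) : qPochhammer 0 q n = 1 := by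
  simp [qPochhammer]

lemma qPochhammer_succ (a q : A) (n : ℕ) :
    qPochhammer a q (n + 1) = qPochhammer a q n * (1 - a * q ^ n) :=
  prod_range_succ _ _

lemma qPochhammer_succ' (a q : A) (n : ℕ) :
    qPochhammer a q (n + 1) = (1 - a) * qPochhammer (a * q) q n := by
  simp only [qPochhammer, prod_range_succ', pow_succ, pow_zero, mul_one, mul_assoc, mul_comm]

lemma qPochhammer_add (a q : A) (m n : ℕ) :
    qPochhammer a q (m + n) = qPochhammer a q m * qPochhammer (a * q ^ m) q n := by
  simp only [qPochhammer, prod_range_add, pow_add, mul_assoc]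

lemma isUnit_qPochhammer {a : A} (ha : IsNilpotent a) (q : A) (n : ℕ) :
    IsUnit (qPochhammer a q n) :=
  IsUnit.prod_iff.mpr fun _ _ => ((Commute.all _ _).isNilpotent_mul_right ha).isUnit_one_sub

lemma sum_range_pow_mul_eq_one_add {x : A} {N : ℕ} (hx : x ^ (N + 1) = 0) {f : ℕ → A}
    (hf : f 0 = 1) :
    ∑ n ∈ range (N + 1), x ^ n * f n = 1 + x * ∑ n ∈ range (N + 1), x ^ n * f (n + 1) := by
  rw [sum_range_succ', sum_range_succ, mul_add, mul_sum, ← mul_assoc, ← pow_succ', hx]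
  simp [hf, pow_succ', mul_assoc, add_comm]

noncomputable def qBinomialCoeff (a q : A) (k : ℕ) : A :=
  qPochhammer a q k * (qPochhammer q q k)⁻¹ʳ

noncomputable def qBinomialSum (a q : A) (N : ℕ) (t : A) : A :=
  ∑ k ∈ range (N + 1), t ^ k * qBinomialCoeff a q k

@[simp]
lemma qBinomialCoeff_zero (a q : A) : qBinomialCoeff a q 0 = 1 := by
  simp [qBinomialCoeff]

@[simp]
lemma qBinomialSum_zero_right (a q : A) (N : ℕ) : qBinomialSum a q N 0 = 1 := by
  simp [qBinomialSum, sum_range_succ']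

variable {a q t : A} {N : ℕ}

lemma qBinomialCoeff_succ_mul (hq : IsNilpotent q) (k : ℕ) :
    qBinomialCoeff a q (k + 1) * (1 - q * q ^ k) = (1 - a * q ^ k) * qBinomialCoeff a q k := by
  have hu : IsUnit (1 - q * q ^ k) :=
    ((Commute.all _ _).isNilpotent_mul_right hq).isUnit_one_sub
  rw [qBinomialCoeff, qBinomialCoeff, qPochhammer_succ, qPochhammer_succ, Ring.mul_inverse_rev]
  linear_combination qPochhammer a q k * (1 - a * q ^ k) * (qPochhammer q q k)⁻¹ʳ *
    Ring.inverse_mul_cancel _ hu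

lemma one_sub_mul_qBinomialSum (hq : IsNilpotent q) (ht : t ^ (N + 1) = 0) :
    (1 - t) * qBinomialSum a q N t = (1 - a * t) * qBinomialSum a q N (t * q) := by
  have htq : (t * q) ^ (N + 1) = 0 := by rw [mul_pow, ht, zero_mul]
  have h1 := sum_range_pow_mul_eq_one_add ht (qBinomialCoeff_zero a q)
  have h2 := sum_range_pow_mul_eq_one_add htq (qBinomialCoeff_zero a q)
  have hshift : ∑ k ∈ range (N + 1), t ^ k * qBinomialCoeff a q (k + 1) -
        q * ∑ k ∈ range (N + 1), (t * q) ^ k * qBinomialCoeff a q (k + 1) =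
      qBinomialSum a q N t - a * qBinomialSum a q N (t * q) := by
    rw [qBinomialSum, qBinomialSum, mul_sum, mul_sum, ← sum_sub_distrib, ← sum_sub_distrib]
    refine sum_congr rfl fun k _ => ?_
    rw [mul_pow]
    linear_combination t ^ k * qBinomialCoeff_succ_mul (a := a) hq k
  simp only [qBinomialSum] at h1 h2 hshift ⊢
  linear_combination h1 - h2 + t * hshift

lemma qBinomialSum_mul_qPochhammer (hq : IsNilpotent q) (n : ℕ) (ht : t ^ (N + 1) = 0) :
    qBinomialSum a q N t * qPochhammer t q n =
      qPochhammer (a * t) q n * qBinomialSum a q N (q ^ n * t) := by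
  induction n generalizing t with
  | zero => simp
  | succ n ih =>
    have htq : (t * q) ^ (N + 1) = 0 := by rw [mul_pow, ht, zero_mul]
    rw [qPochhammer_succ', qPochhammer_succ', ← mul_assoc, mul_comm _ (1 - t),
      one_sub_mul_qBinomialSum hq ht, mul_assoc, ih htq, mul_assoc a t q,
      show q ^ (n + 1) * t = q ^ n * (t * q) by ring]
    ring

-- The q-binomial theorem `∑ (a;q)_k / (q;q)_k t^k = (at;q)_∞ / (t;q)_∞`.
theorem qBinomialSum_mul_qPochhammer_of_mul_eq_zero (hq : IsNilpotent q) {n : ℕ}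
    (ht : t ^ (N + 1) = 0) (hn : q ^ n * t = 0) :
    qBinomialSum a q N t * qPochhammer t q n = qPochhammer (a * t) q n := by
  rw [qBinomialSum_mul_qPochhammer hq n ht, hn, qBinomialSum_zero_right, mul_one]

def qPochhammerSum (b q : A) (N : ℕ) (x : A) : A :=
  ∑ n ∈ range (N + 1), x ^ n * qPochhammer b q n

lemma qPochhammerSum_eq_one_add {b x : A} (hx : x ^ (N + 1) = 0) :
    qPochhammerSum b q N x = 1 + x * (1 - b) * qPochhammerSum (b * q) q N x := by
  rw [qPochhammerSum, sum_range_pow_mul_eq_one_add hx (qPochhammer_zero b q), qPochhammerSum,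
    mul_sum, mul_sum]
  simp only [qPochhammer_succ']
  exact congrArg _ (sum_congr rfl fun n _ => by ring)

lemma one_sub_mul_qPochhammerSum {b x : A} (hx : x ^ (N + 1) = 0) :
    (1 - x) * qPochhammerSum b q N x = 1 - x * b * qPochhammerSum b q N (x * q) := by
  have hsum : ∑ n ∈ range (N + 1), x ^ n * (qPochhammer b q n * (1 - b * q ^ n)) =
      qPochhammerSum b q N x - b * qPochhammerSum b q N (x * q) := by
    rw [qPochhammerSum, qPochhammerSum, mul_sum, ← sum_sub_distrib]
    exact sum_congr rfl fun n _ => by ring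
  have h := sum_range_pow_mul_eq_one_add hx (qPochhammer_zero b q)
  simp only [qPochhammer_succ] at h
  rw [hsum] at h
  change qPochhammerSum b q N x = _ at h
  linear_combination h

lemma pow_succ_mul_pow_eq_zero (hq : q ^ (N + 1) = 0) (c : A) (m : ℕ) :
    (c * q ^ (m + 1)) ^ (N + 1) = 0 := by
  rw [mul_pow, ← pow_mul, mul_comm (m + 1), pow_mul, hq, zero_pow m.succ_ne_zero, mul_zero]

lemma qPochhammerSum_diagonal_succ (hq : q ^ (N + 1) = 0) (k : ℕ) :
    qPochhammerSum (-q ^ (k + 1)) q N (-q ^ (k + 1)) =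
      1 - q ^ (k + 1) + q ^ (3 * k + 4) * qPochhammerSum (-q ^ (k + 2)) q N (-q ^ (k + 2)) := by
  have hx : (-q ^ (k + 1)) ^ (N + 1) = 0 := by
    simpa using pow_succ_mul_pow_eq_zero hq (-1) k
  have hfirst := qPochhammerSum_eq_one_add (b := -q ^ (k + 1)) (q := q) hx
  have hlast := one_sub_mul_qPochhammerSum (b := -q ^ (k + 2)) (q := q) hx
  rw [show -q ^ (k + 1) * q = -q ^ (k + 2) by ring] at hfirst hlast
  rw [hfirst]
  linear_combination (-q ^ (k + 1)) * hlast

lemma mul_qPochhammerSum_neg_eq_sum_add (hq : q ^ (N + 1) = 0) (K : ℕ) :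
    q * qPochhammerSum (-q) q N (-q) =
      ∑ n ∈ range K, (q ^ ((3 * (n + 1) ^ 2 - (n + 1)) / 2) -
          q ^ ((3 * (n + 1) ^ 2 + (n + 1)) / 2)) +
        q ^ ((3 * (K + 1) ^ 2 - (K + 1)) / 2) *
          qPochhammerSum (-q ^ (K + 1)) q N (-q ^ (K + 1)) := by
  induction K with
  | zero => simp
  | succ K ih =>
    have hK : K + 1 ≤ (K + 1) ^ 2 := Nat.le_self_pow two_ne_zero _
    have hp : (3 * (K + 1 + 1) ^ 2 - (K + 1 + 1)) / 2 =
        (3 * (K + 1) ^ 2 - (K + 1)) / 2 + (3 * K + 4) := by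
      have : (K + 1 + 1) ^ 2 = (K + 1) ^ 2 + 2 * K + 3 := by ring
      omega
    have hp' : (3 * (K + 1) ^ 2 + (K + 1)) / 2 = (3 * (K + 1) ^ 2 - (K + 1)) / 2 + (K + 1) := by
      omega
    rw [ih, sum_range_succ, qPochhammerSum_diagonal_succ hq, hp, hp', pow_add, pow_add]
    ring

theorem mul_qPochhammerSum_neg_self (hq : q ^ (N + 1) = 0) :
    q * qPochhammerSum (-q) q N (-q) =
      ∑ n ∈ Icc 1 N, (q ^ ((3 * n ^ 2 - n) / 2) - q ^ ((3 * n ^ 2 + n) / 2)) := by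
  have hN : N + 1 ≤ (N + 1) ^ 2 := Nat.le_self_pow two_ne_zero _
  have hvanish : q ^ ((3 * (N + 1) ^ 2 - (N + 1)) / 2) = 0 := pow_eq_zero_of_le (by omega) hq
  rw [mul_qPochhammerSum_neg_eq_sum_add hq N, hvanish, zero_mul, add_zero,
    sum_Icc_eq_sum_range_succ]

lemma qBinomialSum_zero_pow_succ (hq : q ^ (N + 1) = 0) {m : ℕ} (hm : m ≤ N) :
    qBinomialSum 0 q N (q ^ (m + 1)) = qPochhammer q q m * (qPochhammer q q N)⁻¹ʳ := by
  have hqbin := qBinomialSum_mul_qPochhammer_of_mul_eq_zero (a := 0) (n := N - m) ⟨N + 1, hq⟩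
    (by simpa using pow_succ_mul_pow_eq_zero hq 1 m)
    (by rw [← pow_add, show N - m + (m + 1) = N + 1 by omega, hq])
  have hsplit := qPochhammer_add q q m (N - m)
  rw [Nat.add_sub_cancel' hm, ← pow_succ'] at hsplit
  rw [zero_mul, qPochhammer_zero_left] at hqbin
  rw [Ring.eq_mul_inverse_iff_mul_eq _ _ _ (isUnit_qPochhammer ⟨N + 1, hq⟩ q N), hsplit]
  linear_combination qPochhammer q q m * hqbin

lemma qPochhammer_neg_mul_inverse_succ (hq : q ^ (N + 1) = 0) {m : ℕ} (hm : m ≤ N) :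
    qPochhammer (-q) q m * (qPochhammer q q (m + 1))⁻¹ʳ =
      qBinomialSum (-q) q N (-q ^ (m + 1)) * qPochhammer (-q) q N * (qPochhammer q q N)⁻¹ʳ := by
  have hnil : IsNilpotent q := ⟨N + 1, hq⟩
  have hqbin := qBinomialSum_mul_qPochhammer_of_mul_eq_zero (a := -q) (n := N - m) hnil
    (by simpa using pow_succ_mul_pow_eq_zero hq (-1) m)
    (by rw [mul_neg, ← pow_add, show N - m + (m + 1) = N + 1 by omega, hq, neg_zero])
  have hP := qPochhammer_add (-q) q m (N - m)
  have hQ := qPochhammer_add q q (m + 1) (N - m)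
  have hQN : qPochhammer q q (N + 1) = qPochhammer q q N := by
    rw [qPochhammer_succ, ← pow_succ', hq, sub_zero, mul_one]
  rw [Nat.add_sub_cancel' hm, show -q * q ^ m = -q ^ (m + 1) by ring] at hP
  rw [show m + 1 + (N - m) = N + 1 by omega, hQN,
    show q * q ^ (m + 1) = -q * -q ^ (m + 1) by ring] at hQ
  rw [Ring.eq_mul_inverse_iff_mul_eq _ _ _ (isUnit_qPochhammer hnil q N), hQ, hP]
  linear_combination qPochhammer (-q) q m * qPochhammer (-q * -q ^ (m + 1)) q (N - m) *
      Ring.inverse_mul_cancel _ (isUnit_qPochhammer hnil q (m + 1)) - qPochhammer (-q) q m * hqbin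

lemma sum_pow_mul_inverse_mul_qBinomialSum (q : A) (N : ℕ) :
    ∑ m ∈ range (N + 1),
        q ^ (m + 1) * (qPochhammer q q m)⁻¹ʳ * qBinomialSum (-q) q N (-q ^ (m + 1)) =
      ∑ k ∈ range (N + 1), (-1) ^ k * qPochhammer (-q) q k * (qPochhammer q q k)⁻¹ʳ *
        (q ^ (k + 1) * qBinomialSum 0 q N (q ^ (k + 1))) := by
  simp only [qBinomialSum, qBinomialCoeff, qPochhammer_zero_left, one_mul, mul_sum]
  rw [sum_comm]
  refine sum_congr rfl fun k _ => sum_congr rfl fun m _ => ?_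
  rw [neg_pow]
  ring

lemma prod_Icc_one_add_pow_mul_inverse_sq (q : A) (M : ℕ) :
    ∏ k ∈ Icc 1 M, (1 + q ^ k) * ((1 - q ^ k)⁻¹ʳ) ^ 2 =
      qPochhammer (-q) q M * ((qPochhammer q q M)⁻¹ʳ) ^ 2 := by
  rw [prod_mul_distrib, prod_pow, ← MonoidWithZero.coe_inverse, ← map_prod,
    prod_Icc_eq_prod_range_succ, prod_Icc_eq_prod_range_succ]
  simp [qPochhammer, pow_succ']

theorem sum_pyramid_eq_of_pow_eq_zero (hq : q ^ (N + 1) = 0) :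
    ∑ n ∈ Icc 1 N, (∏ k ∈ Icc 1 (n - 1), (1 + q ^ k) * ((1 - q ^ k)⁻¹ʳ) ^ 2) *
        q ^ n * (1 - q ^ n)⁻¹ʳ =
      ∑ n ∈ Icc 1 N, (q ^ ((3 * n ^ 2 - n) / 2) - q ^ ((3 * n ^ 2 + n) / 2)) *
        ∏ k ∈ Icc 1 N, (1 + q ^ k) * ((1 - q ^ k)⁻¹ʳ) ^ 2 := by
  have hnil : IsNilpotent q := ⟨N + 1, hq⟩
  have hterm : ∀ m, (∏ k ∈ Icc 1 (m + 1 - 1), (1 + q ^ k) * ((1 - q ^ k)⁻¹ʳ) ^ 2) *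
      q ^ (m + 1) * (1 - q ^ (m + 1))⁻¹ʳ =
        q ^ (m + 1) * (qPochhammer q q m)⁻¹ʳ *
          (qPochhammer (-q) q m * (qPochhammer q q (m + 1))⁻¹ʳ) := fun m => by
    rw [Nat.add_sub_cancel, prod_Icc_one_add_pow_mul_inverse_sq, qPochhammer_succ,
      Ring.mul_inverse_rev, ← pow_succ']
    ring
  calc _ = ∑ m ∈ range (N + 1), q ^ (m + 1) * (qPochhammer q q m)⁻¹ʳ *
          (qPochhammer (-q) q m * (qPochhammer q q (m + 1))⁻¹ʳ) := by
        rw [sum_Icc_eq_sum_range_succ, sum_range_succ _ N, hq, zero_mul, zero_mul, add_zero]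
        exact sum_congr rfl fun m _ => hterm m
    _ = ∑ m ∈ range (N + 1), q ^ (m + 1) * (qPochhammer q q m)⁻¹ʳ *
          (qBinomialSum (-q) q N (-q ^ (m + 1)) * qPochhammer (-q) q N *
            (qPochhammer q q N)⁻¹ʳ) := by
        refine sum_congr rfl fun m hm => ?_
        rw [qPochhammer_neg_mul_inverse_succ hq (Nat.lt_succ_iff.mp (mem_range.mp hm))]
    _ = qPochhammer (-q) q N * (qPochhammer q q N)⁻¹ʳ *
          ∑ k ∈ range (N + 1), (-1) ^ k * qPochhammer (-q) q k * (qPochhammer q q k)⁻¹ʳ *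
            (q ^ (k + 1) * qBinomialSum 0 q N (q ^ (k + 1))) := by
        rw [← sum_pow_mul_inverse_mul_qBinomialSum, mul_sum]
        exact sum_congr rfl fun m _ => by ring
    _ = q * qPochhammerSum (-q) q N (-q) *
          (qPochhammer (-q) q N * (qPochhammer q q N)⁻¹ʳ ^ 2) := by
        rw [qPochhammerSum, mul_sum, mul_sum, sum_mul]
        refine sum_congr rfl fun k hk => ?_
        rw [qBinomialSum_zero_pow_succ hq (Nat.lt_succ_iff.mp (mem_range.mp hk))]
        linear_combination (-1) ^ k * qPochhammer (-q) q k * q ^ (k + 1) *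
          qPochhammer (-q) q N * (qPochhammer q q N)⁻¹ʳ ^ 2 *
            Ring.inverse_mul_cancel _ (isUnit_qPochhammer hnil q k)
    _ = _ := by
        rw [mul_qPochhammerSum_neg_self hq, sum_mul, prod_Icc_one_add_pow_mul_inverse_sq]

end QSeries

lemma coeff_eq_of_mk_eq {R : Type*} [CommRing R] {N : ℕ} {f g : R⟦X⟧}
    (h : Ideal.Quotient.mk (Ideal.span {X ^ (N + 1)}) f =
      Ideal.Quotient.mk (Ideal.span {X ^ (N + 1)}) g) :
    coeff N f = coeff N g := by
  rw [Ideal.Quotient.eq, Ideal.mem_span_singleton, X_pow_dvd_iff] at h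
  simpa [sub_eq_zero] using h N N.lt_succ_self

lemma map_inv_one_sub_X_pow {K B : Type*} [Field K] [CommRing B] (φ : K⟦X⟧ →+* B) (k : ℕ) :
    φ ((1 - X ^ k)⁻¹) = (1 - φ X ^ k)⁻¹ʳ := by
  rcases k.eq_zero_or_pos with rfl | hk
  · simp
  · have h : φ (1 - X ^ k) * φ ((1 - X ^ k)⁻¹) = 1 := by
      rw [← map_mul, PowerSeries.mul_inv_cancel _ (by simp [hk.ne']), map_one]
    have h' := Ring.inverse_mul_cancel_left _ (φ (1 - X ^ k)⁻¹) (IsUnit.of_mul_eq_one _ h)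
    rw [h, mul_one] at h'
    rw [← map_pow, ← map_one φ, ← map_sub, h']

theorem stmt13_general (N : ℕ) :
    PowerSeries.coeff (R := ℚ) N (∑ n ∈ Finset.Icc 1 N,
        (∏ k ∈ Finset.Icc 1 (n - 1),
            (1 + (X : PowerSeries ℚ) ^ k) * ((1 - (X : PowerSeries ℚ) ^ k)⁻¹) ^ 2) *
          (X : PowerSeries ℚ) ^ n * (1 - (X : PowerSeries ℚ) ^ n)⁻¹) =
      PowerSeries.coeff (R := ℚ) N (∑ n ∈ Finset.Icc 1 N,
        ((X : PowerSeries ℚ) ^ ((3 * n ^ 2 - n) / 2) -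
            (X : PowerSeries ℚ) ^ ((3 * n ^ 2 + n) / 2)) *
          ∏ k ∈ Finset.Icc 1 N,
            (1 + (X : PowerSeries ℚ) ^ k) * ((1 - (X : PowerSeries ℚ) ^ k)⁻¹) ^ 2) := by
  apply coeff_eq_of_mk_eq
  simp only [map_sum, map_prod, map_mul, map_pow, map_sub, map_add, map_one,
    map_inv_one_sub_X_pow]
  refine sum_pyramid_eq_of_pow_eq_zero ?_
  rw [← map_pow, Ideal.Quotient.eq_zero_iff_mem]
  exact Ideal.mem_span_singleton_self _

/-- `Σ_{n≥1} (∏_{k=1}^{n-1} (1+q^k)/(1-q^k)²) qⁿ/(1-qⁿ)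
  = Σ_{n≥1} (q^{(3n²-n)/2} - q^{(3n²+n)/2}) ∏_{k≥1} (1+q^k)/(1-q^k)²`
as formal power series over ℚ, stated coefficient-wise: for every `N ≥ 1` the `N`-th
coefficients of the partial sums (with the infinite product truncated at `k ≤ N`,
which does not affect coefficients up to degree `N`) agree. -/
theorem stmt13 (N : ℕ) (hN : 1 ≤ N) :
    PowerSeries.coeff (R := ℚ) N (∑ n ∈ Finset.Icc 1 N,
        (∏ k ∈ Finset.Icc 1 (n - 1),
            (1 + (X : PowerSeries ℚ) ^ k) * ((1 - (X : PowerSeries ℚ) ^ k)⁻¹) ^ 2) *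
          (X : PowerSeries ℚ) ^ n * (1 - (X : PowerSeries ℚ) ^ n)⁻¹) =
      PowerSeries.coeff (R := ℚ) N (∑ n ∈ Finset.Icc 1 N,
        ((X : PowerSeries ℚ) ^ ((3 * n ^ 2 - n) / 2) -
            (X : PowerSeries ℚ) ^ ((3 * n ^ 2 + n) / 2)) *
          ∏ k ∈ Finset.Icc 1 N,
            (1 + (X : PowerSeries ℚ) ^ k) * ((1 - (X : PowerSeries ℚ) ^ k)⁻¹) ^ 2) :=
  stmt13_general N
end

section
/- Let p = (p_1 ≥ ... ≥ p_k) be a partition of n, let P be a pyramid in Pyr(p), let e(P) ∈ gl_n be the nilpotent endomorphism acting along the rows of P (sending each basis vector labeled by a box to the vector labeled by its right neighbor, or to 0), and let h(P) be the diagonal matrix whose entries are the first coordinates of the boxes' centers. Then [h(P), e(P)] = 2 e(P), and every element of the centralizer of e(P) in gl_n has nonnegative degree with respect to the grading by ad h(P); i.e., (h(P), e(P)) is a good pair. -/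
/-!
A matrix `A` commuting with the row shift `e = e(P)` commutes with every power `e^t`, and comparing
the entries of `A e^t` and `e^t A` shows that an entry `A b c` vanishes as soon as `b` is nearer to
the left end of its row than `c` is to the left end of its own (shift `c` back to the left end), or
`b` is farther from the right end of its row than `c` is from the right end of its own (shift `b`
until `c` falls off the right end). If `coord b < coord c` and the first case fails, then the row
of `c` starts strictly to the right of the row of `b`; by nesting it also ends weakly to the left
of it, which is the second case.
-/

namespace Pyramid

variable {ι : Type*} [DecidableEq ι] {F : Type*}

/-- `rowShift p 1` is `e(P)`, and `rowShift p t = e(P)^t` moves every box `t` places to the right. -/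
def rowShift [Zero F] [One F] (p : ι → ℕ) (t : ℕ) :
    Matrix (Σ i, Fin (p i)) (Σ i, Fin (p i)) F :=
  fun b c => if b.1 = c.1 ∧ (b.2 : ℕ) = c.2 + t then 1 else 0

def boxCoord {p : ι → ℕ} (f : ι → ℤ) (b : Σ i, Fin (p i)) : ℤ :=
  f b.1 + 2 * (b.2 : ℕ)

section Semiring

variable [Semiring F] {p : ι → ℕ}

lemma rowShift_apply_eq_ite_col (t : ℕ) (b c : Σ i, Fin (p i)) :
    rowShift p t b c =
      if h : (c.2 : ℕ) + t < p c.1 then (if b = ⟨c.1, ⟨c.2 + t, h⟩⟩ then (1 : F) else 0)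
      else 0 := by
  obtain ⟨i, x⟩ := b
  obtain ⟨j, y⟩ := c
  by_cases hij : i = j
  · subst hij
    split_ifs <;> simp_all [rowShift, Fin.ext_iff]; omega
  · simp [rowShift, hij]

lemma rowShift_apply_eq_ite_row (t : ℕ) (b c : Σ i, Fin (p i)) :
    rowShift p t b c =
      if h : t ≤ (b.2 : ℕ) then (if c = ⟨b.1, ⟨b.2 - t, by omega⟩⟩ then (1 : F) else 0)
      else 0 := by
  obtain ⟨i, x⟩ := b
  obtain ⟨j, y⟩ := c
  by_cases hij : i = j
  · subst hij
    split_ifs <;> simp_all [rowShift, Fin.ext_iff] <;> omega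
  · simp [rowShift, hij, Ne.symm hij]

lemma rowShift_zero : rowShift p 0 = (1 : Matrix (Σ i, Fin (p i)) (Σ i, Fin (p i)) F) := by
  ext b c
  simp [rowShift_apply_eq_ite_col, Matrix.one_apply]

variable [Fintype ι]

lemma mul_rowShift_apply (A : Matrix (Σ i, Fin (p i)) (Σ i, Fin (p i)) F) (t : ℕ)
    (b c : Σ i, Fin (p i)) :
    (A * rowShift p t : Matrix _ _ F) b c =
      if h : (c.2 : ℕ) + t < p c.1 then A b ⟨c.1, ⟨c.2 + t, h⟩⟩ else 0 := by
  simp only [Matrix.mul_apply, rowShift_apply_eq_ite_col]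
  split_ifs <;> simp

lemma rowShift_mul_apply (A : Matrix (Σ i, Fin (p i)) (Σ i, Fin (p i)) F) (t : ℕ)
    (b c : Σ i, Fin (p i)) :
    (rowShift p t * A : Matrix _ _ F) b c =
      if h : t ≤ (b.2 : ℕ) then A ⟨b.1, ⟨b.2 - t, by omega⟩⟩ c else 0 := by
  simp only [Matrix.mul_apply, rowShift_apply_eq_ite_row]
  split_ifs <;> simp

lemma rowShift_add_one (t : ℕ) :
    rowShift p (t + 1) = (rowShift p t * rowShift p 1 : Matrix _ _ F) := by
  ext ⟨i, x⟩ ⟨j, y⟩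
  rw [mul_rowShift_apply]
  by_cases hij : i = j
  · subst hij
    dsimp only
    split_ifs with h
    · simp only [rowShift, true_and]
      rw [show (y : ℕ) + 1 + t = y + (t + 1) by omega]
    · simp only [rowShift, true_and, ite_eq_right_iff]
      have := x.2
      omega
  · simp [rowShift, hij]

lemma commute_rowShift {A : Matrix (Σ i, Fin (p i)) (Σ i, Fin (p i)) F}
    (hA : Commute A (rowShift p 1)) (t : ℕ) : Commute A (rowShift p t) := by
  induction t with
  | zero => rw [rowShift_zero]; exact Commute.one_right A
  | succ t ih => rw [rowShift_add_one]; exact ih.mul_right hA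

lemma apply_eq_zero_of_snd_lt {A : Matrix (Σ i, Fin (p i)) (Σ i, Fin (p i)) F}
    (hA : Commute A (rowShift p 1)) {b c : Σ i, Fin (p i)} (h : (b.2 : ℕ) < c.2) :
    A b c = 0 := by
  have := congrFun₂ (commute_rowShift hA c.2).eq b ⟨c.1, ⟨0, by omega⟩⟩
  simpa [mul_rowShift_apply, rowShift_mul_apply, h.not_ge] using this

lemma apply_eq_zero_of_snd_add_lt {A : Matrix (Σ i, Fin (p i)) (Σ i, Fin (p i)) F}
    (hA : Commute A (rowShift p 1)) {b c : Σ i, Fin (p i)}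
    (h : (b.2 : ℕ) + (p c.1 - c.2) < p b.1) : A b c = 0 := by
  have := congrFun₂ (commute_rowShift hA (p c.1 - c.2)).eq ⟨b.1, ⟨b.2 + (p c.1 - c.2), h⟩⟩ c
  simpa [mul_rowShift_apply, rowShift_mul_apply] using this.symm

lemma apply_eq_zero_of_boxCoord_lt (f : ι → ℤ)
    (hnest : ∀ i j, f i < f j → f j + 2 * (p j : ℤ) ≤ f i + 2 * (p i : ℤ))
    {A : Matrix (Σ i, Fin (p i)) (Σ i, Fin (p i)) F} (hA : Commute A (rowShift p 1))
    {b c : Σ i, Fin (p i)} (h : boxCoord f b < boxCoord f c) : A b c = 0 := by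
  unfold boxCoord at h
  by_cases hsnd : (b.2 : ℕ) < c.2
  · exact apply_eq_zero_of_snd_lt hA hsnd
  · have hend := hnest b.1 c.1 (by omega)
    exact apply_eq_zero_of_snd_add_lt hA (by omega)

end Semiring

lemma diagonal_boxCoord_mul_rowShift_sub [Fintype ι] [CommRing F] (p : ι → ℕ) (f : ι → ℤ)
    (t : ℕ) :
    let H : Matrix (Σ i, Fin (p i)) (Σ i, Fin (p i)) F :=
      Matrix.diagonal fun b => ((boxCoord f b : ℤ) : F)
    H * rowShift p t - rowShift p t * H = (2 * t) • rowShift p t := by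
  intro H
  ext ⟨i, x⟩ ⟨j, y⟩
  simp only [H, boxCoord, Matrix.sub_apply, Matrix.diagonal_mul, Matrix.mul_diagonal,
    Matrix.smul_apply, rowShift]
  split_ifs with h
  · obtain ⟨rfl, hxy⟩ := h
    simp only [hxy]
    push_cast
    ring
  · simp

end Pyramid

open Pyramid in
theorem stmt16_general {F : Type*} [Field F]
    (k : ℕ) (p : Fin (k + 1) → ℕ)
    (f : Fin (k + 1) → ℤ)
    (hnestL : ∀ i : Fin k, f i.castSucc ≤ f i.succ)
    (hnestR : ∀ i : Fin k, f i.succ + 2 * (p i.succ : ℤ) ≤ f i.castSucc + 2 * (p i.castSucc : ℤ)) :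
    let B := Σ i : Fin (k + 1), Fin (p i)
    let coord : B → ℤ := fun b => f b.1 + 2 * (b.2 : ℕ)
    let M : Matrix B B F :=
      fun b c => if b.1 = c.1 ∧ (b.2 : ℕ) = (c.2 : ℕ) + 1 then 1 else 0
    let H : Matrix B B F := Matrix.diagonal fun b => ((coord b : ℤ) : F)
    H * M - M * H = 2 • M ∧
      ∀ A : Matrix B B F, A * M = M * A →
        ∀ b c : B, coord b < coord c → A b c = 0 := by
  intro B coord M H
  have hleft : Monotone f := Fin.monotone_iff_le_succ.2 hnestL
  have hright : Antitone fun i => f i + 2 * (p i : ℤ) := Fin.antitone_iff_succ_le.2 hnestR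
  have hnest (i j) (hij : f i < f j) : f j + 2 * (p j : ℤ) ≤ f i + 2 * (p i : ℤ) :=
    hright (hleft.reflect_lt hij).le
  exact ⟨diagonal_boxCoord_mul_rowShift_sub p f 1,
    fun A hA b c hbc => apply_eq_zero_of_boxCoord_lt f hnest hA hbc⟩

/-- for a pyramid `P` with rows `0, ..., k` of lengths `p` and left
endpoints `f` (nested, bottom row symmetric), let `B` be the set of boxes,
`coord b` the first coordinate of a box, `M = e(P)` the nilpotent matrix acting along
the rows and `H = h(P)` the diagonal matrix of the coordinates.  Then
`[H, M] = 2 M`, and every matrix commuting with `M` has nonnegative degree with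
respect to `ad H`, i.e. its entry at `(b, c)` vanishes whenever `coord b < coord c`:
`(h(P), e(P))` is a good pair. -/
theorem stmt16 {F : Type*} [Field F] [CharZero F]
    (k : ℕ) (p : Fin (k + 1) → ℕ)
    (hpos : ∀ i, 0 < p i) (hanti : Antitone p)
    (f : Fin (k + 1) → ℤ) (hbase : f 0 = 1 - (p 0 : ℤ))
    (hnestL : ∀ i : Fin k, f i.castSucc ≤ f i.succ)
    (hnestR : ∀ i : Fin k, f i.succ + 2 * (p i.succ : ℤ) ≤ f i.castSucc + 2 * (p i.castSucc : ℤ)) :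
    let B := Σ i : Fin (k + 1), Fin (p i)
    let coord : B → ℤ := fun b => f b.1 + 2 * (b.2 : ℕ)
    let M : Matrix B B F :=
      fun b c => if b.1 = c.1 ∧ (b.2 : ℕ) = (c.2 : ℕ) + 1 then 1 else 0
    let H : Matrix B B F := Matrix.diagonal fun b => ((coord b : ℤ) : F)
    H * M - M * H = 2 • M ∧
      ∀ A : Matrix B B F, A * M = M * A →
        ∀ b c : B, coord b < coord c → A b c = 0 :=
  stmt16_general k p f hnestL hnestR
end

section
/- For every partition p of n, there exists a semisimple element h^e ∈ sl_n such that the pair (h^e, e(p)) is good and the resulting Z-grading of sl_n is even (all odd graded components vanish). -/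
/-!
Grade the `k`-th vector of a Jordan chain belonging to the part `p i` by `2 (i + k)` and subtract
the mean degree. Then `e(p)` raises degrees by exactly `2`, and all degree differences are even.
A matrix commuting with `e(p)` is block upper triangular Toeplitz: its entry from `⟨i', j', l⟩`
to `⟨i, j, k⟩` vanishes unless `l ≤ k` and `l + p i ≤ k + p i'`. As the parts are strictly
decreasing, `p i - p i' ≥ i' - i` for `i ≤ i'`, so such an entry has `i' + l ≤ i + k`: the
centralizer of `e(p)` lies in nonnegative degrees, which is goodness. (This is not the element
`h^e` of the paper, whose shifts are tuned to the parities of `p (i - 1) - p i`.)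
-/

/-- `(D, E)` is a good pair in `gl(B)`: see statement 17. -/
def IsGoodPair {F : Type*} [Field F] {B : Type*} [Fintype B] [DecidableEq B]
    (D : B → F) (E : Matrix B B F) : Prop :=
  (∀ b c : B, ∃ z : ℤ, D b - D c = (z : F)) ∧
  Matrix.diagonal D * E - E * Matrix.diagonal D = 2 • E ∧
  (∀ A : Matrix B B F, A * E = E * A → ∀ b c : B, A b c ≠ 0 → ∃ n : ℕ, D b - D c = (n : F))

open Finset Matrix

theorem sum_sub_mean_eq_zero {F B : Type*} [Field F] [CharZero F] [Fintype B] (f : B → F) :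
    ∑ b, (f b - (∑ c, f c) / Fintype.card B) = 0 := by
  rcases isEmpty_or_nonempty B with hB | hB
  · simp
  · rw [sum_sub_distrib, sum_const, card_univ, nsmul_eq_mul,
      mul_div_cancel₀ _ (Nat.cast_ne_zero.2 Fintype.card_ne_zero), sub_self]

theorem Matrix.diagonal_mul_sub_mul_diagonal_apply {R B : Type*} [CommRing R] [Fintype B]
    [DecidableEq B] (D : B → R) (E : Matrix B B R) (b c : B) :
    (diagonal D * E - E * diagonal D) b c = (D b - D c) * E b c := by
  rw [sub_apply, diagonal_mul, mul_diagonal, sub_mul, mul_comm (E b c)]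

section GoodPair

variable {F B : Type*} [Field F] [Fintype B] [DecidableEq B]

theorem IsGoodPair.sub_const {D : B → F} {E : Matrix B B F} (h : IsGoodPair D E) (a : F) :
    IsGoodPair (fun b => D b - a) E := by
  obtain ⟨hint, hcomm, hgood⟩ := h
  simp only [IsGoodPair, sub_sub_sub_cancel_right]
  refine ⟨hint, ?_, hgood⟩
  ext b c
  rw [diagonal_mul_sub_mul_diagonal_apply, sub_sub_sub_cancel_right,
    ← diagonal_mul_sub_mul_diagonal_apply, hcomm]

theorem isGoodPair_two_mul_of_grading (E : Matrix B B F) (h : B → ℕ)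
    (hE : ∀ b c, E b c ≠ 0 → h b = h c + 1)
    (hA : ∀ A : Matrix B B F, A * E = E * A → ∀ b c, A b c ≠ 0 → h c ≤ h b) :
    IsGoodPair (fun b => 2 * (h b : F)) E := by
  refine ⟨fun b c => ⟨2 * h b - 2 * h c, by push_cast; ring⟩, ?_,
    fun A hAE b c hne => ⟨2 * (h b - h c), ?_⟩⟩
  · ext b c
    rw [diagonal_mul_sub_mul_diagonal_apply, Matrix.smul_apply, two_nsmul, ← two_mul]
    by_cases hbc : E b c = 0
    · simp [hbc]
    · rw [hE b c hbc]
      push_cast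
      ring
  · rw [Nat.cast_mul, Nat.cast_sub (hA A hAE b c hne)]
    push_cast
    ring

end GoodPair

section JordanNilpotent

variable {ι : Type*} [DecidableEq ι] (p m : ι → ℕ)

/-- Basis of `Fⁿ` adapted to a partition with distinct parts `p i` of multiplicities `m i`:
`⟨i, j, k⟩` is the `k`-th vector of the `j`-th Jordan chain of length `p i`. -/
abbrev JordanIndex : Type _ := Σ i : ι, Fin (m i) × Fin (p i)

/-- The nilpotent `e(p)`, sending each basis vector to the next one in its chain. -/
def jordanNilpotent (R : Type*) [Zero R] [One R] :
    Matrix (JordanIndex p m) (JordanIndex p m) R := fun b c =>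
  if b.1 = c.1 ∧ (b.2.1 : ℕ) = (c.2.1 : ℕ) ∧ (b.2.2 : ℕ) = (c.2.2 : ℕ) + 1 then 1 else 0

variable {p m} {R : Type*} [NonAssocSemiring R] [Fintype ι]

theorem mul_jordanNilpotent_apply (A : Matrix (JordanIndex p m) (JordanIndex p m) R)
    (b : JordanIndex p m) (i : ι) (j : Fin (m i)) (l : ℕ) (hl : l < p i) :
    (A * jordanNilpotent p m R) b ⟨i, j, ⟨l, hl⟩⟩ =
      if h : l + 1 < p i then A b ⟨i, j, ⟨l + 1, h⟩⟩ else 0 := by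
  rw [mul_apply]
  split_ifs with h
  · refine (sum_eq_single_of_mem ⟨i, j, ⟨l + 1, h⟩⟩ (mem_univ _) ?_).trans
      (by simp [jordanNilpotent])
    rintro ⟨i', j', k⟩ - hne
    simp only [jordanNilpotent, mul_ite, mul_one, mul_zero, ite_eq_right_iff]
    rintro ⟨rfl, hj, hk⟩
    exact absurd (congrArg (Sigma.mk i') (Prod.ext (Fin.ext hj) (Fin.ext hk))) hne
  · refine sum_eq_zero fun ⟨i', j', k⟩ _ => ?_
    simp only [jordanNilpotent, mul_ite, mul_one, mul_zero, ite_eq_right_iff]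
    rintro ⟨rfl, -, hk⟩
    exact absurd (hk ▸ k.isLt) h

theorem jordanNilpotent_mul_apply_zero (A : Matrix (JordanIndex p m) (JordanIndex p m) R)
    (i : ι) (j : Fin (m i)) (h : 0 < p i) (c : JordanIndex p m) :
    (jordanNilpotent p m R * A) ⟨i, j, ⟨0, h⟩⟩ c = 0 := by
  refine sum_eq_zero fun ⟨i', j', k⟩ _ => ?_
  simp [jordanNilpotent]

theorem jordanNilpotent_mul_apply_succ (A : Matrix (JordanIndex p m) (JordanIndex p m) R)
    (i : ι) (j : Fin (m i)) (k : ℕ) (h : k + 1 < p i) (c : JordanIndex p m) :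
    (jordanNilpotent p m R * A) ⟨i, j, ⟨k + 1, h⟩⟩ c = A ⟨i, j, ⟨k, by omega⟩⟩ c := by
  rw [mul_apply]
  refine (sum_eq_single_of_mem ⟨i, j, ⟨k, by omega⟩⟩ (mem_univ _) ?_).trans
    (by simp [jordanNilpotent])
  rintro ⟨i', j', k'⟩ - hne
  simp only [jordanNilpotent, ite_mul, one_mul, zero_mul, ite_eq_right_iff]
  rintro ⟨rfl, hj, hk⟩
  exact absurd (congrArg (Sigma.mk i) (Prod.ext (Fin.ext hj.symm) (Fin.ext (by simp_all)))) hne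

variable {A : Matrix (JordanIndex p m) (JordanIndex p m) R}
  (hA : A * jordanNilpotent p m R = jordanNilpotent p m R * A)
include hA

theorem le_of_mul_jordanNilpotent_comm {i i' : ι} {j : Fin (m i)} {j' : Fin (m i')} {k l : ℕ}
    (hk : k < p i) (hl : l < p i') (hne : A ⟨i, j, ⟨k, hk⟩⟩ ⟨i', j', ⟨l, hl⟩⟩ ≠ 0) : l ≤ k := by
  induction l generalizing k with
  | zero => exact k.zero_le
  | succ l ih =>
    have hcomm := congrFun₂ hA ⟨i, j, ⟨k, hk⟩⟩ ⟨i', j', ⟨l, by omega⟩⟩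
    rw [mul_jordanNilpotent_apply, dif_pos hl] at hcomm
    cases k with
    | zero => exact absurd (hcomm.trans (jordanNilpotent_mul_apply_zero A i j hk _)) hne
    | succ k =>
      rw [jordanNilpotent_mul_apply_succ] at hcomm
      exact Nat.succ_le_succ (ih _ (by omega) (hcomm ▸ hne))

theorem add_le_of_mul_jordanNilpotent_comm {i i' : ι} {j : Fin (m i)} {j' : Fin (m i')}
    {k l : ℕ} (hk : k < p i) (hl : l < p i')
    (hne : A ⟨i, j, ⟨k, hk⟩⟩ ⟨i', j', ⟨l, hl⟩⟩ ≠ 0) : l + p i ≤ k + p i' := by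
  obtain ⟨t, ht⟩ : ∃ t, k + t + 1 = p i := ⟨p i - k - 1, by omega⟩
  induction t generalizing k l with
  | zero => omega
  | succ t ih =>
    have hcomm := congrFun₂ hA ⟨i, j, ⟨k + 1, by omega⟩⟩ ⟨i', j', ⟨l, hl⟩⟩
    rw [mul_jordanNilpotent_apply, jordanNilpotent_mul_apply_succ] at hcomm
    split_ifs at hcomm with hl'
    · have := ih (by omega) hl' (hcomm ▸ hne) (by omega)
      omega
    · exact absurd hcomm.symm hne

end JordanNilpotent

section Degree

variable {d : ℕ} {p m : Fin (d + 1) → ℕ}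

theorem StrictAnti.antitone_add_val (hp : StrictAnti p) : Antitone fun i => p i + (i : ℕ) :=
  Fin.antitone_iff_succ_le.2 fun i => by
    have := hp (Fin.castSucc_lt_succ (i := i))
    simp only [Fin.val_succ, Fin.val_castSucc]
    omega

def jordanDegree (b : JordanIndex p m) : ℕ := b.1 + b.2.2

theorem jordanDegree_eq_succ_of_jordanNilpotent_ne_zero {R : Type*} [Zero R] [One R]
    {b c : JordanIndex p m} (h : jordanNilpotent p m R b c ≠ 0) :
    jordanDegree b = jordanDegree c + 1 := by
  unfold jordanNilpotent at h
  split_ifs at h with hbc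
  · obtain ⟨hi, -, hk⟩ := hbc
    have := congrArg Fin.val hi
    unfold jordanDegree
    omega
  · exact absurd rfl h

theorem jordanDegree_le_of_mul_jordanNilpotent_comm {R : Type*} [NonAssocSemiring R]
    (hp : StrictAnti p) {A : Matrix (JordanIndex p m) (JordanIndex p m) R}
    (hA : A * jordanNilpotent p m R = jordanNilpotent p m R * A) {b c : JordanIndex p m}
    (hne : A b c ≠ 0) : jordanDegree c ≤ jordanDegree b := by
  obtain ⟨i, j, k, hk⟩ := b
  obtain ⟨i', j', l, hl⟩ := c
  have hlk := le_of_mul_jordanNilpotent_comm hA hk hl hne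
  have hparts := add_le_of_mul_jordanNilpotent_comm hA hk hl hne
  simp only [jordanDegree]
  rcases le_or_gt i' i with hi | hi
  · have : (i' : ℕ) ≤ i := hi
    omega
  · have := hp.antitone_add_val hi.le
    dsimp only at this
    omega

end Degree

theorem stmt18_general {F : Type*} [Field F] [CharZero F]
    (d : ℕ) (p m : Fin (d + 1) → ℕ)
    (hstrict : StrictAnti p) :
    let B := Σ i : Fin (d + 1), Fin (m i) × Fin (p i)
    let E : Matrix B B F := fun b c =>
      if b.1 = c.1 ∧ (b.2.1 : ℕ) = (c.2.1 : ℕ) ∧ (b.2.2 : ℕ) = (c.2.2 : ℕ) + 1 then 1 else 0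
    ∃ D : B → F, IsGoodPair D E ∧
      (∀ b c : B, ∃ z : ℤ, D b - D c = ((2 * z : ℤ) : F)) ∧
      (∑ b : B, D b = 0) := by
  intro B E
  let D₀ : JordanIndex p m → F := fun b => 2 * (jordanDegree b : F)
  have hgood : IsGoodPair D₀ (jordanNilpotent p m F) :=
    isGoodPair_two_mul_of_grading _ jordanDegree
      (fun _ _ => jordanDegree_eq_succ_of_jordanNilpotent_ne_zero)
      (fun _ hA _ _ => jordanDegree_le_of_mul_jordanNilpotent_comm hstrict hA)
  refine ⟨fun b => D₀ b - (∑ c, D₀ c) / Fintype.card B, hgood.sub_const _,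
    fun b c => ⟨jordanDegree b - jordanDegree c, ?_⟩, sum_sub_mean_eq_zero D₀⟩
  simp only [D₀]
  push_cast
  ring

/-- for every partition (with distinct parts `p 0 > ... > p d` of
multiplicities `m i > 0`) there exists a traceless diagonal element `D` (i.e. in
`sl_n`) such that `(D, e(p))` is a good pair and the associated ℤ-grading is even
(all eigenvalue differences of `ad D` are even integers). -/
theorem stmt18 {F : Type*} [Field F] [CharZero F]
    (d : ℕ) (p m : Fin (d + 1) → ℕ)
    (hstrict : StrictAnti p) (hppos : ∀ i, 0 < p i) (hmpos : ∀ i, 0 < m i) :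
    let B := Σ i : Fin (d + 1), Fin (m i) × Fin (p i)
    let E : Matrix B B F := fun b c =>
      if b.1 = c.1 ∧ (b.2.1 : ℕ) = (c.2.1 : ℕ) ∧ (b.2.2 : ℕ) = (c.2.2 : ℕ) + 1 then 1 else 0
    ∃ D : B → F, IsGoodPair D E ∧
      (∀ b c : B, ∃ z : ℤ, D b - D c = ((2 * z : ℤ) : F)) ∧
      (∑ b : B, D b = 0) :=
  stmt18_general d p m hstrict
end
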